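/- arXiv:1706.06732 — 3 statements merged into one kernel-verified Lean document; each statement's English description precedes it below -/
import Mathlib

section
/- Suppose λ = 0, L̄'_r(0⁺) = −∞, and L̄ is right continuous at zero, i.e. lim_{t→0⁺} L̄(t) = 0. Then for every net (x_α, y_α) in [-∞,+∞]² (indexed by the same directed set A) such that (x_α) converges to −∞ and liminf_α y_α > −∞, one has limsup_α c_α·log μ_α([x_α, y_α]) = limsup_α c_α·log μ_α((x_α, y_α)) = 0 = −lim_α L̄*(x_α). -/
/-!
Write `Λ_α(t) = c_α log ∫ exp (t x / c_α) dμ_α(x)`, so that `L̄ = limsup_α Λ_α`. Each `Λ_α` is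
convex (Hölder) and vanishes at `0`. Since `L̄` is finite near `0⁺` with slopes tending to `-∞`,
convexity gives, for every `N`, some `s > 0` with `L̄(s) < -N s`; comparing `Λ_α` at a negative
point, at `0` and at such an `s` then shows `L̄ = +∞` on `(-∞, 0)`.

For the lower bound fix `b ≤ 0` and `0 ≤ t ≤ t'` and split the integral defining `Λ_α(t)` at `-R`
and `b`. By the principle of the largest term,
`L̄(t) ≤ max (-t R) (limsup c_α log μ_α [-R, b]) ((t - t') b + L̄(t'))`.
Given `ρ > 0`, take `t'` with `L̄(t') < -(|b| + 1) t'`, then `t < t'` with `L̄(t) > -min ρ t'`,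
then `R` large: only the middle term can reach `L̄(t)`, so it exceeds `-ρ`. As `x_α < -R`
eventually, this bounds both interval probabilities from below. The Chebyshev bound
`L̄(t) ≥ -t R + limsup c_α log μ_α [-R, ∞) ≥ -t R - ρ` for `t ≥ 0` then gives `L̄*(x) ≤ ρ` for
`x ≤ -R`.
-/

open Filter MeasureTheory Set Topology

noncomputable section

/-- `c · log m` as an extended real number, where `m ∈ [0,∞]`. -/
def elog (c : ℝ) (m : ENNReal) : EReal := (c : EReal) * ENNReal.log m

/-- The generalized log-moment generating function `L̄` associated with the net
`(μ_α, c_α)` indexed by the filter `lf`: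
`L̄(t) = limsup_α c_α · log ∫ exp(t·x/c_α) dμ_α(x)`. -/
def genLogMGF {ι : Type*} (lf : Filter ι) (μ : ι → Measure ℝ) (c : ι → ℝ) (t : ℝ) : EReal :=
  Filter.limsup
    (fun i => elog (c i) (∫⁻ x : ℝ, ENNReal.ofReal (Real.exp (t * x / c i)) ∂ (μ i))) lf

/-- Legendre–Fenchel transform of an `EReal`-valued function on `ℝ`, evaluated at an
extended real argument: `L*(x) = sup_t (t·x − L(t))`. -/
def LegendreEE (L : ℝ → EReal) (x : EReal) : EReal := ⨆ t : ℝ, ((t : EReal) * x - L t)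

open Classical in
/-- The right derivative of a convex `EReal`-valued function at `t`, with the conventions
`L'_r(t) = +∞` when `L(s) = +∞` for all `s > t` and `L'_r(t) = -∞` when `L(s) = -∞` for
some `s > t`; otherwise it is the infimum of the right difference quotients. -/
def rightDerivE (L : ℝ → EReal) (t : ℝ) : EReal :=
  if ∀ s : ℝ, t < s → L s = ⊤ then ⊤
  else if ∃ s : ℝ, t < s ∧ L s = ⊥ then ⊥
  else ⨅ s ∈ Set.Ioi t, (L s - L t) * (((s - t)⁻¹ : ℝ) : EReal)

/-- The left derivative of a convex `EReal`-valued function at `t` (supremum of left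
difference quotients). -/
def leftDerivE (L : ℝ → EReal) (t : ℝ) : EReal :=
  ⨆ s ∈ Set.Iio t, (L t - L s) * (((t - s)⁻¹ : ℝ) : EReal)

/-- Right limit at `a` of an `EReal`-valued function (as a `limsup`; it coincides with
`lim_{t→a⁺} f(t)` whenever the latter exists, e.g. for monotone or convex `f`). -/
def rightLimE (f : ℝ → EReal) (a : ℝ) : EReal := Filter.limsup f (nhdsWithin a (Set.Ioi a))

/-- Left limit at `a` of an `EReal`-valued function (as a `limsup`; it coincides with
`lim_{t→a⁻} f(t)` whenever the latter exists). -/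
def leftLimE (f : ℝ → EReal) (a : ℝ) : EReal := Filter.limsup f (nhdsWithin a (Set.Iio a))

/-- `L` is affine on the interval `(a, b]`. -/
def AffineOnIoc (L : ℝ → EReal) (a b : ℝ) : Prop :=
  ∃ p q : ℝ, ∀ s ∈ Set.Ioc a b, L s = ((p * s + q : ℝ) : EReal)

/-- `λ̃ = sup {t > λ : L is affine on (λ, t]}` (equal to `λ` if there is no such `t`). -/
def tildeOf (L : ℝ → EReal) (lam : ℝ) : ℝ :=
  sSup (insert lam {t : ℝ | lam < t ∧ AffineOnIoc L lam t})

/-- Differentiability at `t` of an `EReal`-valued function: `L(t)` is finite and the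
difference quotients converge to a (finite) real number. -/
def EDifferentiableAt (L : ℝ → EReal) (t : ℝ) : Prop :=
  (∃ r : ℝ, L t = (r : EReal)) ∧
  ∃ d : ℝ, Filter.Tendsto (fun s => (L s - L t) * (((s - t)⁻¹ : ℝ) : EReal))
    (nhdsWithin t {t}ᶜ) (nhds (d : EReal))

/-- The function `l₀(x) = − lim_{ε→0⁺} limsup_α c_α · log μ_α((x−ε, x+ε))` (the limit over
`ε` exists by monotonicity and equals the infimum). -/
def l0fun {ι : Type*} (lf : Filter ι) (μ : ι → Measure ℝ) (c : ι → ℝ) (x : ℝ) : EReal :=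
  - ⨅ ε ∈ Set.Ioi (0:ℝ),
      Filter.limsup (fun i => elog (c i) (μ i (Set.Ioo (x - ε) (x + ε)))) lf

/-- `L` restricted to `[0,∞)` is proper: `(−∞,+∞]`-valued with at least one finite value. -/
def LbarProper (L : ℝ → EReal) : Prop :=
  (∀ t : ℝ, 0 ≤ t → L t ≠ ⊥) ∧ ∃ t : ℝ, 0 ≤ t ∧ L t ≠ ⊤

/-- `μ([x, y])` for extended-real endpoints `x, y`, with `μ` regarded as a measure on
`[-∞, +∞]`. -/
def muIccE (μ : Measure ℝ) (x y : EReal) : ENNReal :=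
  μ {z : ℝ | x ≤ (z : EReal) ∧ (z : EReal) ≤ y}

/-- `μ((x, y))` for extended-real endpoints `x, y`. -/
def muIooE (μ : Measure ℝ) (x y : EReal) : ENNReal :=
  μ {z : ℝ | x < (z : EReal) ∧ (z : EReal) < y}

open Classical in
/-- The Legendre transform extended to `[-∞,+∞]` by continuity, with the paper's
convention `L̄*(−∞) = −L̄(0⁺)`. -/
def LegendreExt (L : ℝ → EReal) (x : EReal) : EReal :=
  if x = ⊥ then -(rightLimE L 0) else if x = ⊤ then ⊤ else LegendreEE L x

end

open scoped ENNReal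

lemma elog_mono {c : ℝ} (hc : 0 ≤ c) {m m' : ℝ≥0∞} (h : m ≤ m') : elog c m ≤ elog c m' :=
  mul_le_mul_of_nonneg_left (ENNReal.log_monotone h) (EReal.coe_nonneg.2 hc)

lemma elog_one (c : ℝ) : elog c 1 = 0 := by
  simp [elog]

lemma elog_nonpos {c : ℝ} (hc : 0 ≤ c) {m : ℝ≥0∞} (hm : m ≤ 1) : elog c m ≤ 0 :=
  (elog_mono hc hm).trans_eq (elog_one c)

lemma elog_ofReal_exp_mul {c : ℝ} (hc : 0 < c) (w : ℝ) (m : ℝ≥0∞) :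
    elog c (ENNReal.ofReal (Real.exp (w / c)) * m) = w + elog c m := by
  rw [elog, ENNReal.log_mul_add, ENNReal.log_ofReal_of_pos (Real.exp_pos _), Real.log_exp,
    EReal.left_distrib_of_nonneg_of_ne_top (EReal.coe_nonneg.2 hc.le) (EReal.coe_ne_top c),
    ← EReal.coe_mul, mul_div_cancel₀ w hc.ne', elog]

lemma elog_ofReal_exp {c : ℝ} (hc : 0 < c) (w : ℝ) :
    elog c (ENNReal.ofReal (Real.exp (w / c))) = w := by
  simpa [elog_one] using elog_ofReal_exp_mul hc w 1

lemma elog_add_le {c : ℝ} (hc : 0 < c) (a b : ℝ≥0∞) :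
    elog c (a + b) ≤ ((c * Real.log 2 : ℝ) : EReal) + max (elog c a) (elog c b) := by
  have two_eq : (2 : ℝ≥0∞) = ENNReal.ofReal (Real.exp (c * Real.log 2 / c)) := by
    rw [mul_div_cancel_left₀ _ hc.ne', Real.exp_log two_pos, ENNReal.ofReal_ofNat]
  calc elog c (a + b) ≤ elog c (2 * max a b) :=
        elog_mono hc.le (two_mul (max a b) ▸ add_le_add (le_max_left a b) (le_max_right a b))
    _ = ((c * Real.log 2 : ℝ) : EReal) + max (elog c a) (elog c b) := by
        have elog_monotone : Monotone (elog c) := fun _ _ => elog_mono hc.le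
        rw [two_eq, elog_ofReal_exp_mul hc, elog_monotone.map_max]

section Limsup

variable {ι : Type*} {lf : Filter ι} [lf.NeBot]

lemma limsup_coe_add (w : ℝ) (f : ι → EReal) :
    limsup (fun i => (w : EReal) + f i) lf = w + limsup f lf := by
  apply le_antisymm
  · exact (EReal.limsup_add_le (u := fun _ => (w : EReal)) (v := f) (by simp) (by simp)).trans
      (by rw [limsup_const])
  · calc (w : EReal) + limsup f lf = limsup f lf + liminf (fun _ => (w : EReal)) lf := by
          rw [liminf_const, add_comm]
      _ ≤ limsup (f + fun _ => (w : EReal)) lf := EReal.le_limsup_add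
      _ = limsup (fun i => (w : EReal) + f i) lf := by simp only [Pi.add_def, add_comm]

/-- The principle of the largest term. -/
lemma limsup_elog_add_le {c : ι → ℝ} (hc : ∀ i, 0 < c i) (hc0 : Tendsto c lf (𝓝 0))
    (a b : ι → ℝ≥0∞) :
    limsup (fun i => elog (c i) (a i + b i)) lf
      ≤ max (limsup (fun i => elog (c i) (a i)) lf) (limsup (fun i => elog (c i) (b i)) lf) := by
  have hlog2 : Tendsto (fun i => ((c i * Real.log 2 : ℝ) : EReal)) lf (𝓝 0) := by
    rw [← EReal.coe_zero]
    exact EReal.tendsto_coe.2 (by simpa using hc0.mul_const (Real.log 2))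
  calc limsup (fun i => elog (c i) (a i + b i)) lf
      ≤ limsup ((fun i => ((c i * Real.log 2 : ℝ) : EReal))
          + fun i => max (elog (c i) (a i)) (elog (c i) (b i))) lf :=
        limsup_le_limsup (Eventually.of_forall fun i => elog_add_le (hc i) _ _)
    _ ≤ 0 + limsup (fun i => max (elog (c i) (a i)) (elog (c i) (b i))) lf := by
        have h0 := hlog2.limsup_eq
        rw [← h0]
        exact EReal.limsup_add_le (.inl (by rw [h0]; simp)) (.inl (by rw [h0]; simp))
    _ = _ := by rw [zero_add, limsup_max]

end Limsup

noncomputable def scaledMGF (μ : Measure ℝ) (c t : ℝ) : ℝ≥0∞ :=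
  ∫⁻ x, ENNReal.ofReal (Real.exp (t * x / c)) ∂μ

lemma genLogMGF_eq_limsup {ι : Type*} (lf : Filter ι) (μ : ι → Measure ℝ) (c : ι → ℝ) (t : ℝ) :
    genLogMGF lf μ c t = limsup (fun i => elog (c i) (scaledMGF (μ i) (c i) t)) lf := rfl

section ScaledMGF

variable (μ : Measure ℝ)

lemma measurable_ofReal_exp_mul_div (c t : ℝ) :
    Measurable fun x : ℝ => ENNReal.ofReal (Real.exp (t * x / c)) := by
  fun_prop

lemma scaledMGF_zero [IsProbabilityMeasure μ] (c : ℝ) : scaledMGF μ c 0 = 1 := by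
  simp [scaledMGF]

lemma scaledMGF_le_rpow_mul_rpow (c : ℝ) {a b : ℝ} (ha : 0 ≤ a) (hb : 0 ≤ b) (hab : a + b = 1)
    (p r : ℝ) : scaledMGF μ c (a * p + b * r) ≤ scaledMGF μ c p ^ a * scaledMGF μ c r ^ b := by
  refine le_of_eq_of_le ?_ (ENNReal.lintegral_mul_norm_pow_le (μ := μ)
    (measurable_ofReal_exp_mul_div c p).aemeasurable
    (measurable_ofReal_exp_mul_div c r).aemeasurable ha hb hab)
  refine lintegral_congr fun x => ?_
  rw [ENNReal.ofReal_rpow_of_pos (Real.exp_pos _), ENNReal.ofReal_rpow_of_pos (Real.exp_pos _),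
    ← Real.exp_mul, ← Real.exp_mul, ← ENNReal.ofReal_mul (Real.exp_pos _).le, ← Real.exp_add]
  congr 2
  ring

lemma elog_scaledMGF_convex {c : ℝ} (hc : 0 < c) {a b : ℝ} (ha : 0 ≤ a) (hb : 0 ≤ b)
    (hab : a + b = 1) (p r : ℝ) :
    elog c (scaledMGF μ c (a * p + b * r))
      ≤ a * elog c (scaledMGF μ c p) + b * elog c (scaledMGF μ c r) := by
  refine (elog_mono hc.le (scaledMGF_le_rpow_mul_rpow μ c ha hb hab p r)).trans_eq ?_
  rw [elog, ENNReal.log_mul_add, ENNReal.log_rpow, ENNReal.log_rpow,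
    EReal.left_distrib_of_nonneg_of_ne_top (EReal.coe_nonneg.2 hc.le) (EReal.coe_ne_top c),
    elog, elog, mul_left_comm, mul_left_comm (c : EReal)]

lemma ofReal_exp_mul_measure_Ici_le_scaledMGF {c t : ℝ} (hc : 0 < c) (ht : 0 ≤ t) (a : ℝ) :
    ENNReal.ofReal (Real.exp (t * a / c)) * μ (Ici a) ≤ scaledMGF μ c t := by
  rw [← setLIntegral_const]
  refine (setLIntegral_mono (measurable_ofReal_exp_mul_div c t) fun x hx => ?_).trans
    (setLIntegral_le_lintegral _ _)
  exact ENNReal.ofReal_le_ofReal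
    (Real.exp_le_exp.2 (div_le_div_of_nonneg_right (mul_le_mul_of_nonneg_left hx ht) hc.le))

lemma scaledMGF_le_add [IsProbabilityMeasure μ] {c t t' : ℝ} (hc : 0 < c) (ht : 0 ≤ t)
    (htt' : t ≤ t') {b : ℝ} (hb : b ≤ 0) (R : ℝ) :
    scaledMGF μ c t ≤ ENNReal.ofReal (Real.exp (-(t * R) / c)) + μ (Icc (-R) b)
      + ENNReal.ofReal (Real.exp ((t - t') * b / c)) * scaledMGF μ c t' := by
  set f := fun x : ℝ => ENNReal.ofReal (Real.exp (t * x / c))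
  have hf_le : ∀ {w x : ℝ}, t * x ≤ w → f x ≤ ENNReal.ofReal (Real.exp (w / c)) := fun h =>
    ENNReal.ofReal_le_ofReal (Real.exp_le_exp.2 (div_le_div_of_nonneg_right h hc.le))
  have hcover : (univ : Set ℝ) ⊆ Iio (-R) ∪ Icc (-R) b ∪ Ioi b := by
    intro x _
    rcases lt_or_ge x (-R) with h | h
    · exact Or.inl (Or.inl h)
    rcases le_or_gt x b with h' | h'
    · exact Or.inl (Or.inr ⟨h, h'⟩)
    · exact Or.inr h'
  calc scaledMGF μ c t = ∫⁻ x in univ, f x ∂μ := (setLIntegral_univ f).symm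
    _ ≤ ∫⁻ x in Iio (-R) ∪ Icc (-R) b ∪ Ioi b, f x ∂μ := lintegral_mono_set hcover
    _ ≤ (∫⁻ x in Iio (-R), f x ∂μ) + (∫⁻ x in Icc (-R) b, f x ∂μ) + ∫⁻ x in Ioi b, f x ∂μ :=
        (lintegral_union_le _ _ _).trans (add_le_add_left (lintegral_union_le _ _ _) _)
    _ ≤ _ := by
      gcongr ?_ + ?_ + ?_
      · refine (setLIntegral_mono measurable_const fun x hx => hf_le (w := -(t * R)) ?_).trans ?_
        · exact (mul_le_mul_of_nonneg_left (le_of_lt hx) ht).trans_eq (mul_neg t R)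
        · rw [setLIntegral_const]
          exact mul_le_of_le_one_right' prob_le_one
      · refine (setLIntegral_mono measurable_const fun x hx => (hf_le (w := 0) ?_).trans_eq
          (by simp)).trans_eq (setLIntegral_one _)
        exact mul_nonpos_of_nonneg_of_nonpos ht (hx.2.trans hb)
      · refine (setLIntegral_mono ((measurable_ofReal_exp_mul_div c t').const_mul
          (ENNReal.ofReal (Real.exp ((t - t') * b / c))))
          fun x hx => ?_).trans ?_
        · rw [← ENNReal.ofReal_mul (Real.exp_pos _).le, ← Real.exp_add, ← add_div]
          refine hf_le ?_
          nlinarith [mul_le_mul_of_nonpos_left (le_of_lt (show b < x from hx))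
            (sub_nonpos.2 htt')]
        · rw [lintegral_const_mul _ (measurable_ofReal_exp_mul_div c t')]
          gcongr
          exact setLIntegral_le_lintegral _ _

end ScaledMGF

lemma exists_lt_of_rightDerivE_lt {L : ℝ → EReal} {t r a : ℝ} (ht : L t = r)
    (h : rightDerivE L t < a) : ∃ s, t < s ∧ L s < ((r + a * (s - t) : ℝ) : EReal) := by
  unfold rightDerivE at h
  split_ifs at h with h_top h_bot
  · exact absurd h not_top_lt
  · obtain ⟨s, hts, hs⟩ := h_bot
    exact ⟨s, hts, hs ▸ EReal.bot_lt_coe _⟩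
  · obtain ⟨s, hs⟩ := iInf_lt_iff.1 h
    obtain ⟨hts, hslope⟩ := iInf_lt_iff.1 hs
    refine ⟨s, hts, ?_⟩
    have hts' : 0 < s - t := sub_pos.2 hts
    rw [ht] at hslope
    generalize L s = y at hslope ⊢
    induction y using EReal.rec with
    | bot => exact EReal.bot_lt_coe _
    | top =>
      rw [EReal.top_sub_coe, EReal.top_mul_coe_of_pos (inv_pos.2 hts')] at hslope
      exact absurd hslope not_top_lt
    | coe q =>
      rw [← EReal.coe_sub, ← EReal.coe_mul, EReal.coe_lt_coe_iff,
        ← div_eq_mul_inv, div_lt_iff₀ hts'] at hslope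
      exact EReal.coe_lt_coe_iff.2 (by linarith)

lemma LegendreExt_nonneg {L : ℝ → EReal} (h0 : L 0 = 0) (hrc : Tendsto L (𝓝[>] 0) (𝓝 0))
    (x : EReal) : 0 ≤ LegendreExt L x := by
  unfold LegendreExt
  split_ifs
  · rw [rightLimE, hrc.limsup_eq, neg_zero]
  · exact le_top
  · exact le_iSup_of_le (0 : ℝ) (by simp [h0])

lemma LegendreExt_le {L : ℝ → EReal} (hneg : ∀ s < 0, L s = ⊤) (h0 : rightLimE L 0 = 0)
    {R ρ : ℝ} (hρ : 0 ≤ ρ) (hpos : ∀ t, 0 ≤ t → ((-(t * R) - ρ : ℝ) : EReal) ≤ L t) {x : EReal}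
    (hx : x ≤ ((-R : ℝ) : EReal)) : LegendreExt L x ≤ ρ := by
  induction x using EReal.rec with
  | bot => simpa [LegendreExt, h0] using hρ
  | top => exact absurd hx (by simp)
  | coe x =>
    simp only [LegendreExt, EReal.coe_ne_bot, EReal.coe_ne_top, if_false, LegendreEE]
    refine iSup_le fun t => ?_
    rcases lt_or_ge t 0 with ht | ht
    · rw [hneg t ht, EReal.sub_top]
      exact bot_le
    · calc (t : EReal) * x - L t ≤ ((t * x : ℝ) : EReal) - ((-(t * R) - ρ : ℝ) : EReal) :=
            EReal.sub_le_sub (EReal.coe_mul t x).ge (hpos t ht)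
        _ = ((t * (x + R) + ρ : ℝ) : EReal) := by
            rw [← EReal.coe_sub]
            ring_nf
        _ ≤ ρ := EReal.coe_le_coe_iff.2 (by nlinarith [EReal.coe_le_coe_iff.1 hx])

section GenLogMGF

variable {ι : Type*} {lf : Filter ι} [lf.NeBot] {μ : ι → Measure ℝ} {c : ι → ℝ}

lemma coe_add_limsup_elog_Ici_le_genLogMGF (hc : ∀ i, 0 < c i) {t : ℝ} (ht : 0 ≤ t) (a : ℝ) :
    ((t * a : ℝ) : EReal) + limsup (fun i => elog (c i) (μ i (Ici a))) lf
      ≤ genLogMGF lf μ c t := by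
  rw [← limsup_coe_add, genLogMGF_eq_limsup]
  refine limsup_le_limsup (Eventually.of_forall fun i => ?_)
  dsimp only
  rw [← elog_ofReal_exp_mul (hc i)]
  exact elog_mono (hc i).le (ofReal_exp_mul_measure_Ici_le_scaledMGF (μ i) (hc i) ht a)

variable [∀ i, IsProbabilityMeasure (μ i)]

lemma genLogMGF_zero : genLogMGF lf μ c 0 = 0 := by
  simp [genLogMGF_eq_limsup, scaledMGF_zero, elog_one]

lemma genLogMGF_le_div_mul (hc : ∀ i, 0 < c i) {t s : ℝ} (ht : 0 ≤ t) (hts : t < s) :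
    genLogMGF lf μ c t ≤ ((t / s : ℝ) : EReal) * genLogMGF lf μ c s := by
  have hs : 0 < s := ht.trans_lt hts
  have hts' : t / s ≤ 1 := (div_le_one hs).2 hts.le
  rw [genLogMGF_eq_limsup, genLogMGF_eq_limsup, ← EReal.limsup_const_mul_of_nonneg_of_ne_top
    (EReal.coe_nonneg.2 (div_nonneg ht hs.le)) (EReal.coe_ne_top _)]
  refine limsup_le_limsup (Eventually.of_forall fun i => ?_)
  have h := elog_scaledMGF_convex (μ i) (hc i) (sub_nonneg.2 hts') (div_nonneg ht hs.le)
    (sub_add_cancel 1 (t / s)) 0 s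
  rwa [mul_zero, zero_add, div_mul_cancel₀ t hs.ne', scaledMGF_zero, elog_one, mul_zero,
    zero_add] at h

lemma genLogMGF_le_max (hc : ∀ i, 0 < c i) (hc0 : Tendsto c lf (𝓝 0)) {t t' : ℝ} (ht : 0 ≤ t)
    (htt' : t ≤ t') {b : ℝ} (hb : b ≤ 0) (R : ℝ) :
    genLogMGF lf μ c t ≤ max (max ((-(t * R) : ℝ) : EReal)
      (limsup (fun i => elog (c i) (μ i (Icc (-R) b))) lf))
      (((t - t') * b : ℝ) + genLogMGF lf μ c t') := by
  have h_exp : ∀ i, elog (c i) (ENNReal.ofReal (Real.exp (-(t * R) / c i)))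
      = ((-(t * R) : ℝ) : EReal) := fun i => elog_ofReal_exp (hc i) _
  have h_exp_mul : ∀ i, elog (c i) (ENNReal.ofReal (Real.exp ((t - t') * b / c i))
      * scaledMGF (μ i) (c i) t') = ((t - t') * b : ℝ) + elog (c i) (scaledMGF (μ i) (c i) t') :=
    fun i => elog_ofReal_exp_mul (hc i) _ _
  calc genLogMGF lf μ c t
      ≤ limsup (fun i => elog (c i) (ENNReal.ofReal (Real.exp (-(t * R) / c i))
          + μ i (Icc (-R) b) + ENNReal.ofReal (Real.exp ((t - t') * b / c i))
          * scaledMGF (μ i) (c i) t')) lf :=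
        limsup_le_limsup (Eventually.of_forall fun i =>
          elog_mono (hc i).le (scaledMGF_le_add (μ i) (hc i) ht htt' hb R))
    _ ≤ _ := (limsup_elog_add_le hc hc0 _ _).trans (max_le_max
        ((limsup_elog_add_le hc hc0 _ _).trans_eq (by simp only [h_exp, limsup_const]))
        (by simp only [h_exp_mul, limsup_coe_add, genLogMGF_eq_limsup, le_refl]))

/-- Since `L̄` is convex with `L̄(0) = 0`, a steep right slope at a point `t` near `0`, where `L̄`
is finite, pushes the chord through the origin below any line. -/
lemma exists_genLogMGF_lt_neg_mul (hc : ∀ i, 0 < c i)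
    (hrc : Tendsto (genLogMGF lf μ c) (𝓝[>] 0) (𝓝 0))
    (hbot : rightLimE (rightDerivE (genLogMGF lf μ c)) 0 = ⊥) (N : ℝ) :
    ∃ s > 0, genLogMGF lf μ c s < ((-(N * s) : ℝ) : EReal) := by
  have h_slope : ∀ᶠ t in 𝓝[>] 0, rightDerivE (genLogMGF lf μ c) t < ((-N : ℝ) : EReal) :=
    eventually_lt_of_limsup_lt (hbot.trans_lt (EReal.bot_lt_coe _))
  have h_finite : ∀ᶠ t in 𝓝[>] 0, genLogMGF lf μ c t ∈ Ioo (-1 : EReal) 1 :=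
    hrc (Ioo_mem_nhds (by norm_num) (by norm_num))
  obtain ⟨t, hder, ⟨hLt_bot, hLt_top⟩, ht : 0 < t⟩ :=
    (h_slope.and (h_finite.and self_mem_nhdsWithin)).exists
  have hLt : genLogMGF lf μ c t = ((genLogMGF lf μ c t).toReal : EReal) :=
    (EReal.coe_toReal hLt_top.ne_top (ne_bot_of_gt hLt_bot)).symm
  obtain ⟨s, hts, hs⟩ := exists_lt_of_rightDerivE_lt hLt hder
  have hchord := genLogMGF_le_div_mul (lf := lf) (μ := μ) hc ht.le hts
  rw [hLt] at hchord
  refine ⟨s, ht.trans hts, ?_⟩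
  generalize (genLogMGF lf μ c t).toReal = r at hs hchord
  generalize genLogMGF lf μ c s = y at hs hchord ⊢
  induction y using EReal.rec with
  | bot => exact EReal.bot_lt_coe _
  | top => exact absurd hs not_top_lt
  | coe q =>
    rw [← EReal.coe_mul, EReal.coe_le_coe_iff, div_mul_eq_mul_div,
      le_div_iff₀ (ht.trans hts)] at hchord
    rw [EReal.coe_lt_coe_iff] at hs ⊢
    nlinarith

lemma genLogMGF_neg_eq_top (hc : ∀ i, 0 < c i)
    (hrc : Tendsto (genLogMGF lf μ c) (𝓝[>] 0) (𝓝 0))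
    (hbot : rightLimE (rightDerivE (genLogMGF lf μ c)) 0 = ⊥) {s : ℝ} (hs : s < 0) :
    genLogMGF lf μ c s = ⊤ := by
  refine (EReal.eq_top_iff_forall_lt _).2 fun K => ?_
  obtain ⟨u, hu, hLu⟩ := exists_genLogMGF_lt_neg_mul hc hrc hbot ((K + 1) / -s)
  have hus : 0 < u - s := by linarith
  have ha : 0 < u / (u - s) := div_pos hu hus
  have hb : 0 < -s / (u - s) := div_pos (neg_pos.2 hs) hus
  have hab : u / (u - s) + -s / (u - s) = 1 := by field_simp; ring
  have hzero : u / (u - s) * s + -s / (u - s) * u = 0 := by field_simp; ring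
  refine (EReal.coe_lt_coe_iff.2 (lt_add_one K)).trans_le ?_
  rw [genLogMGF_eq_limsup] at hLu ⊢
  refine le_limsup_of_frequently_le (Eventually.frequently ?_)
  filter_upwards [eventually_lt_of_limsup_lt hLu] with i hi
  have hconv := elog_scaledMGF_convex (μ i) (hc i) ha.le hb.le hab s u
  rw [hzero, scaledMGF_zero, elog_one] at hconv
  generalize elog (c i) (scaledMGF (μ i) (c i) s) = X at hconv ⊢
  generalize elog (c i) (scaledMGF (μ i) (c i) u) = Y at hconv hi
  induction X using EReal.rec with
  | bot => simp [EReal.coe_mul_bot_of_pos ha] at hconv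
  | top => exact le_top
  | coe x =>
    induction Y using EReal.rec with
    | bot => simp [EReal.coe_mul_bot_of_pos hb] at hconv
    | top => exact absurd hi not_top_lt
    | coe y =>
      rw [← EReal.coe_mul, ← EReal.coe_mul, ← EReal.coe_add, EReal.coe_nonneg] at hconv
      rw [EReal.coe_lt_coe_iff] at hi
      rw [EReal.coe_le_coe_iff]
      have h1 : 0 ≤ u * x + -s * y := by
        have := mul_nonneg hus.le hconv
        rwa [mul_add, ← mul_assoc, ← mul_assoc, mul_div_cancel₀ _ hus.ne',
          mul_div_cancel₀ _ hus.ne'] at this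
      have h2 : -s * y < -((K + 1) * u) := by
        refine (mul_lt_mul_of_pos_left hi (neg_pos.2 hs)).trans_eq ?_
        field_simp [hs.ne]
      nlinarith

lemma exists_neg_lt_limsup_elog_Icc (hc : ∀ i, 0 < c i) (hc0 : Tendsto c lf (𝓝 0))
    (hrc : Tendsto (genLogMGF lf μ c) (𝓝[>] 0) (𝓝 0))
    (hbot : rightLimE (rightDerivE (genLogMGF lf μ c)) 0 = ⊥) {b : ℝ} (hb : b ≤ 0) {ρ : ℝ}
    (hρ : 0 < ρ) :
    ∃ R : ℝ, ((-ρ : ℝ) : EReal) < limsup (fun i => elog (c i) (μ i (Icc (-R) b))) lf := by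
  obtain ⟨t', ht', hLt'⟩ := exists_genLogMGF_lt_neg_mul hc hrc hbot (|b| + 1)
  set ρ' := min ρ t'
  have hρ' : 0 < ρ' := lt_min hρ ht'
  obtain ⟨t, ⟨ht, htt'⟩, hLt⟩ : ∃ t ∈ Ioo 0 t', ((-ρ' : ℝ) : EReal) < genLogMGF lf μ c t :=
    (Eventually.and (Ioo_mem_nhdsGT ht') (hrc.eventually (lt_mem_nhds
      (by exact_mod_cast neg_neg_of_pos hρ')))).exists
  refine ⟨ρ' / t, lt_of_le_of_lt (EReal.coe_le_coe_iff.2 (neg_le_neg (min_le_left ρ t')))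
    (hLt.trans_le ?_)⟩
  -- the two terms next to `μ [-R, b]` in the largest-term bound lie below `L̄ t`
  have hA : ((-(t * (ρ' / t)) : ℝ) : EReal) < genLogMGF lf μ c t := by
    rwa [mul_div_cancel₀ _ ht.ne']
  have hC : (((t - t') * b : ℝ) : EReal) + genLogMGF lf μ c t' < genLogMGF lf μ c t := by
    refine (EReal.add_lt_add_left_coe hLt' _).trans_le (le_trans ?_ hLt.le)
    rw [← EReal.coe_add, EReal.coe_le_coe_iff, abs_of_nonpos hb]
    nlinarith [mul_nonpos_of_nonneg_of_nonpos ht.le hb, min_le_right ρ t']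
  rcases le_max_iff.1 (genLogMGF_le_max (μ := μ) hc hc0 ht.le htt'.le hb (ρ' / t)) with h | h
  · exact (le_max_iff.1 h).resolve_left hA.not_ge
  · exact absurd h hC.not_ge

lemma limsup_elog_muIooE_nonneg (hc : ∀ i, 0 < c i) (hc0 : Tendsto c lf (𝓝 0))
    (hrc : Tendsto (genLogMGF lf μ c) (𝓝[>] 0) (𝓝 0))
    (hbot : rightLimE (rightDerivE (genLogMGF lf μ c)) 0 = ⊥) {x y : ι → EReal}
    (hx : Tendsto x lf (𝓝 ⊥)) (hy : ⊥ < liminf y lf) :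
    0 ≤ limsup (fun i => elog (c i) (muIooE (μ i) (x i) (y i))) lf := by
  obtain ⟨b, -, hb⟩ := EReal.lt_iff_exists_real_btwn.1 hy
  refine EReal.ge_of_forall_gt_iff_ge.1 fun z hz => ?_
  obtain ⟨R, hR⟩ := exists_neg_lt_limsup_elog_Icc hc hc0 hrc hbot (min_le_right b 0)
    (neg_pos.2 (by exact_mod_cast hz) : 0 < -z)
  rw [neg_neg] at hR
  refine hR.le.trans (limsup_le_limsup ?_)
  filter_upwards [hx.eventually_lt_const (EReal.bot_lt_coe (-R)),
    eventually_lt_of_lt_liminf hb] with i hxi hyi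
  exact elog_mono (hc i).le (measure_mono fun w hw =>
    ⟨hxi.trans_le (EReal.coe_le_coe_iff.2 hw.1),
      (EReal.coe_le_coe_iff.2 (hw.2.trans (min_le_left b 0))).trans_lt hyi⟩)

lemma tendsto_LegendreExt_genLogMGF (hc : ∀ i, 0 < c i) (hc0 : Tendsto c lf (𝓝 0))
    (hrc : Tendsto (genLogMGF lf μ c) (𝓝[>] 0) (𝓝 0))
    (hbot : rightLimE (rightDerivE (genLogMGF lf μ c)) 0 = ⊥) {x : ι → EReal}
    (hx : Tendsto x lf (𝓝 ⊥)) :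
    Tendsto (fun i => LegendreExt (genLogMGF lf μ c) (x i)) lf (𝓝 0) := by
  refine tendsto_order.2 ⟨fun a ha => Eventually.of_forall fun i =>
    ha.trans_le (LegendreExt_nonneg genLogMGF_zero hrc _), fun a ha => ?_⟩
  obtain ⟨ρ, hρ, hρa⟩ := EReal.lt_iff_exists_real_btwn.1 ha
  have hρ : 0 < ρ := by exact_mod_cast hρ
  obtain ⟨R, hR⟩ := exists_neg_lt_limsup_elog_Icc hc hc0 hrc hbot le_rfl hρ
  have hpos : ∀ t, 0 ≤ t → ((-(t * R) - ρ : ℝ) : EReal) ≤ genLogMGF lf μ c t := fun t ht =>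
    calc ((-(t * R) - ρ : ℝ) : EReal) = ((t * -R : ℝ) : EReal) + ((-ρ : ℝ) : EReal) := by
          rw [← EReal.coe_add]
          ring_nf
      _ ≤ ((t * -R : ℝ) : EReal) + limsup (fun i => elog (c i) (μ i (Ici (-R)))) lf :=
          add_le_add_right (hR.le.trans (limsup_le_limsup (Eventually.of_forall fun i =>
            elog_mono (hc i).le (measure_mono Icc_subset_Ici_self)))) _
      _ ≤ genLogMGF lf μ c t := coe_add_limsup_elog_Ici_le_genLogMGF hc ht (-R)
  filter_upwards [hx.eventually_lt_const (EReal.bot_lt_coe (-R))] with i hi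
  exact (LegendreExt_le (fun _ => genLogMGF_neg_eq_top hc hrc hbot) hrc.limsup_eq hρ.le hpos
    hi.le).trans_lt hρa

end GenLogMGF

theorem statement1
    {ι : Type*} (lf : Filter ι) [lf.NeBot]
    (μ : ι → Measure ℝ) [∀ i, IsProbabilityMeasure (μ i)]
    (c : ι → ℝ) (hc : ∀ i, 0 < c i) (hc0 : Filter.Tendsto c lf (nhds (0 : ℝ)))
    (L : ℝ → EReal) (hL : L = genLogMGF lf μ c)
    (hbot : rightLimE (rightDerivE L) 0 = ⊥)
    (hrc : Filter.Tendsto L (nhdsWithin 0 (Set.Ioi 0)) (nhds (0 : EReal)))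
    (x y : ι → EReal)
    (hx : Filter.Tendsto x lf (nhds (⊥ : EReal)))
    (hy : ⊥ < Filter.liminf y lf) :
    Filter.limsup (fun i => elog (c i) (muIccE (μ i) (x i) (y i))) lf = 0 ∧
    Filter.limsup (fun i => elog (c i) (muIooE (μ i) (x i) (y i))) lf = 0 ∧
    Filter.Tendsto (fun i => LegendreExt L (x i)) lf (nhds (0 : EReal)) := by
  subst hL
  have hIoo_le_Icc : limsup (fun i => elog (c i) (muIooE (μ i) (x i) (y i))) lf
      ≤ limsup (fun i => elog (c i) (muIccE (μ i) (x i) (y i))) lf :=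
    limsup_le_limsup (Eventually.of_forall fun i =>
      elog_mono (hc i).le (measure_mono fun z hz => ⟨hz.1.le, hz.2.le⟩))
  have hIcc_nonpos : limsup (fun i => elog (c i) (muIccE (μ i) (x i) (y i))) lf ≤ 0 :=
    limsup_le_of_le (by isBoundedDefault)
      (Eventually.of_forall fun i => elog_nonpos (hc i).le prob_le_one)
  have hIoo_nonneg := limsup_elog_muIooE_nonneg hc hc0 hrc hbot hx hy
  exact ⟨le_antisymm hIcc_nonpos (hIoo_nonneg.trans hIoo_le_Icc),
    le_antisymm (hIoo_le_Icc.trans hIcc_nonpos) hIoo_nonneg,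
    tendsto_LegendreExt_genLogMGF hc hc0 hrc hbot hx⟩
end

section
/- The following are equivalent: (i) L̄'_r is not right continuous at 0 (i.e. L̄'_r(0) ≠ L̄'_r(0⁺)); (ii) L̄|[0,+∞) is not lower semicontinuous at 0, L̄'_r(0) = −∞ and L̄'_r(0⁺) > −∞; (iii) L̄|[0,+∞) is not lower semicontinuous at 0 and L̄'_r(0⁺) ∈ ℝ; (iv) L̄'_r(0) = −∞ and L̄'_r(0⁺) > −∞. The same equivalences hold with 'L̄'_r(0⁺) > −∞' replaced by 'L̄'_r(0⁺) ∈ ℝ'. In particular, L̄'_r(0) ∈ ℝ if and only if L̄'_r(0) = L̄'_r(0⁺) ∈ ℝ. -/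
open Filter MeasureTheory Set Topology

/-! Write `D = L̄'_r(0)` and `R = L̄'_r(0⁺)`. Only three facts about a convex `L` with `L 0 = 0`
are needed. If `L` is lower semicontinuous at `0` within `[0, ∞)`, then `D = R`: convexity puts
the slope `L s / s` below every slope `(L s - L t) / (s - t)` with `0 < t < s`, and lower
semicontinuity makes the latter tend to `L s / s` as `t → 0⁺`. If it is not, then `L t ≤ y < 0`
for arbitrarily small `t > 0`, so `D ≤ y / t` forces `D = -∞`. Finally `R < +∞` as soon as `L`
is finite somewhere on `(0, ∞)`, by the three-slope inequality; otherwise `D = +∞`.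
Convexity of `L̄` is Hölder's inequality, and `L̄(0) = 0` because the `μ_α` are probability
measures. -/

-- Points where `L = ⊥` are excluded since `⊥ + ⊤ = ⊥` in `EReal`.
def EConvex (L : ℝ → EReal) : Prop :=
  ∀ ⦃a b l k : ℝ⦄, 0 < l → 0 < k → l + k = 1 → L a ≠ ⊥ → L b ≠ ⊥ →
    L (l * a + k * b) ≤ (l : EReal) * L a + (k : EReal) * L b

noncomputable def eslope (L : ℝ → EReal) (t s : ℝ) : EReal :=
  (L s - L t) * (((s - t)⁻¹ : ℝ) : EReal)

section RightDeriv

variable {L : ℝ → EReal} {t s : ℝ}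

lemma eslope_coe {a b : ℝ} (ht : L t = a) (hs : L s = b) :
    eslope L t s = ((b - a) / (s - t) : ℝ) := by
  rw [eslope, ht, hs, div_eq_mul_inv]
  norm_cast

lemma eslope_eq_top (hts : t < s) (ht : L t ≠ ⊤) (hs : L s = ⊤) : eslope L t s = ⊤ := by
  rw [eslope, hs, EReal.top_sub ht, EReal.top_mul_coe_of_pos (inv_pos.2 (sub_pos.2 hts))]

lemma rightDerivE_eq_top (h : ∀ s, t < s → L s = ⊤) : rightDerivE L t = ⊤ :=
  if_pos h

lemma rightDerivE_eq_bot (hts : t < s) (hs : L s = ⊥) : rightDerivE L t = ⊥ := by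
  rw [rightDerivE, if_neg fun h => by simp [h s hts] at hs, if_pos ⟨s, hts, hs⟩]

lemma rightDerivE_le_eslope (hts : t < s) (hs : L s ≠ ⊤) : rightDerivE L t ≤ eslope L t s := by
  unfold rightDerivE
  split_ifs with htop
  · exact absurd (htop s hts) hs
  · exact bot_le
  · exact iInf₂_le s hts

lemma le_rightDerivE {b : EReal} (hbot : ∀ s, t < s → L s ≠ ⊥)
    (hb : ∀ s, t < s → b ≤ eslope L t s) : b ≤ rightDerivE L t := by
  unfold rightDerivE
  split_ifs with _ hex
  · exact le_top
  · obtain ⟨s, hts, hs⟩ := hex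
    exact absurd hs (hbot s hts)
  · exact le_iInf₂ hb

lemma le_rightLimE {f : ℝ → EReal} {a : ℝ} {b : EReal} (h : ∀ᶠ t in 𝓝[>] a, b ≤ f t) :
    b ≤ rightLimE f a :=
  le_limsup_of_frequently_le h.frequently

lemma rightLimE_le_of_tendsto {f g : ℝ → EReal} {a : ℝ} {b : EReal}
    (hfg : ∀ᶠ t in 𝓝[>] a, f t ≤ g t) (hg : Tendsto g (𝓝[>] a) (𝓝 b)) : rightLimE f a ≤ b :=
  (limsup_le_limsup hfg).trans_eq hg.limsup_eq

lemma rightLimE_rightDerivE_eq_bot {a : ℝ} (has : a < s) (hs : L s = ⊥) :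
    rightLimE (rightDerivE L) a = ⊥ :=
  le_bot_iff.1 <| rightLimE_le_of_tendsto
    (mem_of_superset (Ioo_mem_nhdsGT has) fun _ ht => (rightDerivE_eq_bot ht.2 hs).le)
    tendsto_const_nhds

lemma rightLimE_rightDerivE_le_of_eventually_lt {m r : ℝ} (hs : 0 < s) (hr : L s = r)
    (hlow : ∀ᶠ t in 𝓝[>] 0, (m : EReal) < L t) :
    rightLimE (rightDerivE L) 0 ≤ ((r - m) / s : ℝ) := by
  refine rightLimE_le_of_tendsto (g := fun t => (((r - m) / (s - t) : ℝ) : EReal)) ?_ ?_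
  · filter_upwards [hlow, Ioo_mem_nhdsGT hs] with t hlt ht
    calc rightDerivE L t ≤ eslope L t s := rightDerivE_le_eslope ht.2 (hr ▸ EReal.coe_ne_top r)
      _ ≤ ((r - m : ℝ) : EReal) * (((s - t)⁻¹ : ℝ) : EReal) := by
        rw [eslope, hr, EReal.coe_sub]
        exact mul_le_mul_of_nonneg_right (EReal.sub_le_sub le_rfl hlt.le)
          (EReal.coe_nonneg.2 (inv_pos.2 (sub_pos.2 ht.2)).le)
      _ = (((r - m) / (s - t) : ℝ) : EReal) := by
        rw [div_eq_mul_inv]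
        norm_cast
  · refine EReal.tendsto_coe.2 (tendsto_nhdsWithin_of_tendsto_nhds ?_)
    have hcont : ContinuousAt (fun t : ℝ => (r - m) / (s - t)) 0 := by
      fun_prop (disch := simpa using hs.ne')
    simpa using hcont.tendsto

lemma rightLimE_rightDerivE_le_eslope_zero (h0 : L 0 = 0)
    (hlsc : LowerSemicontinuousWithinAt L (Ici 0) 0) (hs : 0 < s) (hbot : L s ≠ ⊥) :
    rightLimE (rightDerivE L) 0 ≤ eslope L 0 s := by
  by_cases htop : L s = ⊤
  · rw [eslope_eq_top hs (by simp [h0]) htop]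
    exact le_top
  obtain ⟨r, hr⟩ : ∃ r : ℝ, L s = r := ⟨_, (EReal.coe_toReal htop hbot).symm⟩
  rw [eslope_coe (by rw [h0, EReal.coe_zero]) hr, sub_zero, sub_zero]
  have hε : ∀ ε > 0, rightLimE (rightDerivE L) 0 ≤ ((r - -ε) / s : ℝ) := fun ε hε =>
    rightLimE_rightDerivE_le_of_eventually_lt hs hr <|
      nhdsWithin_mono 0 Ioi_subset_Ici_self <| hlsc _ <|
        show ((-ε : ℝ) : EReal) < L 0 by rw [h0]; exact_mod_cast neg_neg_of_pos hε
  refine ge_of_tendsto (x := 𝓝[>] (0 : ℝ))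
    (EReal.tendsto_coe.2 (tendsto_nhdsWithin_of_tendsto_nhds ?_))
    (eventually_nhdsWithin_of_forall hε)
  simpa using ((continuous_const_add r).tendsto 0).div_const s

lemma rightLimE_rightDerivE_le_of_lsc (h0 : L 0 = 0)
    (hlsc : LowerSemicontinuousWithinAt L (Ici 0) 0) :
    rightLimE (rightDerivE L) 0 ≤ rightDerivE L 0 := by
  by_cases hex : ∃ s, 0 < s ∧ L s = ⊥
  · obtain ⟨s, hs, hbot⟩ := hex
    exact (rightLimE_rightDerivE_eq_bot hs hbot).trans_le bot_le
  push Not at hex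
  exact le_rightDerivE hex fun s hs =>
    rightLimE_rightDerivE_le_eslope_zero h0 hlsc hs (hex s hs)

lemma lowerSemicontinuousWithinAt_of_rightDerivE_ne_bot (h0 : L 0 = 0)
    (hD : rightDerivE L 0 ≠ ⊥) : LowerSemicontinuousWithinAt L (Ici 0) 0 := by
  obtain ⟨m, -, hm⟩ := EReal.exists_between_coe_real (bot_lt_iff_ne_bot.2 hD)
  have hbound : ∀ t ∈ Ici (0 : ℝ), ((m * t : ℝ) : EReal) ≤ L t := by
    intro t ht
    rcases (mem_Ici.1 ht).eq_or_lt with rfl | ht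
    · simp [h0]
    by_cases htop : L t = ⊤
    · simp [htop]
    have hbot : L t ≠ ⊥ := fun h => hD (rightDerivE_eq_bot ht h)
    obtain ⟨r, hr⟩ : ∃ r : ℝ, L t = r := ⟨_, (EReal.coe_toReal htop hbot).symm⟩
    have hslope := hm.trans_le (rightDerivE_le_eslope ht htop)
    rw [eslope_coe (by rw [h0, EReal.coe_zero]) hr, sub_zero, sub_zero, EReal.coe_lt_coe_iff,
      lt_div_iff₀ ht] at hslope
    rw [hr]
    exact_mod_cast hslope.le
  intro y hy
  have hlin : Tendsto (fun t : ℝ => ((m * t : ℝ) : EReal)) (𝓝[Ici 0] 0) (𝓝 0) := by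
    refine EReal.tendsto_coe.2 (tendsto_nhdsWithin_of_tendsto_nhds ?_)
    simpa using ((continuous_const_mul m).tendsto 0)
  filter_upwards [hlin.eventually (lt_mem_nhds (h0 ▸ hy)), self_mem_nhdsWithin] with t hy ht
  exact hy.trans_le (hbound t ht)

end RightDeriv

namespace EConvex

variable {L : ℝ → EReal} {t s : ℝ}

lemma le_of_coe (hL : EConvex L) {u v w a c : ℝ} (huv : u < v) (hvw : v < w) (hu : L u = a)
    (hw : L w = c) : L v ≤ (((w - v) * a + (v - u) * c) / (w - u) : ℝ) := by
  have hwu : 0 < w - u := by linarith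
  have key := hL (div_pos (sub_pos.2 hvw) hwu) (div_pos (sub_pos.2 huv) hwu)
    (by field_simp; ring) (hu ▸ EReal.coe_ne_bot a) (hw ▸ EReal.coe_ne_bot c)
  have hv : (w - v) / (w - u) * u + (v - u) / (w - u) * w = v := by field_simp; ring
  rw [hv, hu, hw] at key
  refine key.trans_eq ?_
  norm_cast
  field_simp

lemma eslope_le_eslope (hL : EConvex L) {u v w a b c : ℝ} (huv : u < v) (hvw : v < w)
    (hu : L u = a) (hv : L v = b) (hw : L w = c) : eslope L u v ≤ eslope L v w := by
  have key := hL.le_of_coe huv hvw hu hw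
  rw [hv, EReal.coe_le_coe_iff, le_div_iff₀ (by linarith)] at key
  rw [eslope_coe hu hv, eslope_coe hv hw, EReal.coe_le_coe_iff,
    div_le_div_iff₀ (sub_pos.2 huv) (sub_pos.2 hvw)]
  linear_combination key

lemma ne_top_of_lt (hL : EConvex L) (h0 : L 0 = 0) (ht : 0 < t) (hts : t < s) (hbot : L s ≠ ⊥)
    (htop : L s ≠ ⊤) : L t ≠ ⊤ :=
  ne_top_of_le_ne_top (EReal.coe_ne_top _) <|
    hL.le_of_coe ht hts (by rw [h0, EReal.coe_zero]) (EReal.coe_toReal htop hbot).symm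

lemma rightDerivE_zero_le (hL : EConvex L) (h0 : L 0 = 0) (hbot : ∀ s, 0 < s → L s ≠ ⊥)
    (ht : 0 < t) : rightDerivE L 0 ≤ rightDerivE L t := by
  by_cases htop : L t = ⊤
  · rw [rightDerivE_eq_top fun s hts => not_ne_iff.1 fun hs =>
      hL.ne_top_of_lt h0 ht hts (hbot s (ht.trans hts)) hs htop]
    exact le_top
  obtain ⟨a, ha⟩ : ∃ a : ℝ, L t = a := ⟨_, (EReal.coe_toReal htop (hbot t ht)).symm⟩
  refine le_rightDerivE (fun s hs => hbot s (ht.trans hs)) fun s hts => ?_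
  by_cases hstop : L s = ⊤
  · rw [eslope_eq_top hts htop hstop]
    exact le_top
  obtain ⟨b, hb⟩ : ∃ b : ℝ, L s = b := ⟨_, (EReal.coe_toReal hstop (hbot s (ht.trans hts))).symm⟩
  calc rightDerivE L 0 ≤ eslope L 0 t := rightDerivE_le_eslope ht htop
    _ ≤ eslope L t s := hL.eslope_le_eslope ht hts (by rw [h0, EReal.coe_zero]) ha hb

lemma rightDerivE_zero_le_rightLimE (hL : EConvex L) (h0 : L 0 = 0) :
    rightDerivE L 0 ≤ rightLimE (rightDerivE L) 0 := by
  by_cases hex : ∃ s, 0 < s ∧ L s = ⊥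
  · obtain ⟨s, hs, hbot⟩ := hex
    exact (rightDerivE_eq_bot hs hbot).trans_le bot_le
  push Not at hex
  exact le_rightLimE (eventually_nhdsWithin_of_forall fun t ht => hL.rightDerivE_zero_le h0 hex ht)

lemma rightDerivE_zero_eq_rightLimE_of_lsc (hL : EConvex L) (h0 : L 0 = 0)
    (hlsc : LowerSemicontinuousWithinAt L (Ici 0) 0) :
    rightDerivE L 0 = rightLimE (rightDerivE L) 0 :=
  (hL.rightDerivE_zero_le_rightLimE h0).antisymm (rightLimE_rightDerivE_le_of_lsc h0 hlsc)

lemma rightLimE_rightDerivE_ne_top (hL : EConvex L) (h0 : L 0 = 0) (hs : 0 < s)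
    (htop : L s ≠ ⊤) : rightLimE (rightDerivE L) 0 ≠ ⊤ := by
  by_cases hex : ∃ u, 0 < u ∧ L u = ⊥
  · obtain ⟨u, hu, hbot⟩ := hex
    rw [rightLimE_rightDerivE_eq_bot hu hbot]
    exact bot_ne_top
  push Not at hex
  have hv : 0 < s / 2 := half_pos hs
  have hvs : s / 2 < s := half_lt_self hs
  have hvtop := hL.ne_top_of_lt h0 hv hvs (hex s hs) htop
  obtain ⟨b, hb⟩ : ∃ b : ℝ, L (s / 2) = b := ⟨_, (EReal.coe_toReal hvtop (hex _ hv)).symm⟩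
  obtain ⟨c, hc⟩ : ∃ c : ℝ, L s = c := ⟨_, (EReal.coe_toReal htop (hex s hs)).symm⟩
  have hbound : ∀ t ∈ Ioo 0 (s / 2), rightDerivE L t ≤ eslope L (s / 2) s := by
    rintro t ⟨ht, htv⟩
    obtain ⟨a, ha⟩ : ∃ a : ℝ, L t = a :=
      ⟨_, (EReal.coe_toReal (hL.ne_top_of_lt h0 ht htv (hex _ hv) hvtop) (hex t ht)).symm⟩
    calc rightDerivE L t ≤ eslope L t (s / 2) := rightDerivE_le_eslope htv hvtop
      _ ≤ eslope L (s / 2) s := hL.eslope_le_eslope htv hvs ha hb hc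
  refine ne_top_of_le_ne_top ?_ (rightLimE_le_of_tendsto
    (mem_of_superset (Ioo_mem_nhdsGT hv) hbound) tendsto_const_nhds)
  rw [eslope_coe hb hc]
  exact EReal.coe_ne_top _

lemma rightDerivE_zero_eq_top_of_rightLimE (hL : EConvex L) (h0 : L 0 = 0)
    (hR : rightLimE (rightDerivE L) 0 = ⊤) : rightDerivE L 0 = ⊤ :=
  rightDerivE_eq_top fun _ hs => not_ne_iff.1 fun htop =>
    hL.rightLimE_rightDerivE_ne_top h0 hs htop hR

end EConvex

lemma EReal.ne_iff_of_cases {D R : EReal} {P : Prop} (hP : P → D = R)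
    (hnP : ¬P → D = ⊥) (hR : R = ⊤ → D = ⊤) :
    ((D ≠ R) ↔ (¬P ∧ D = ⊥ ∧ R ≠ ⊥)) ∧
    ((D ≠ R) ↔ (¬P ∧ ∃ r : ℝ, R = r)) ∧
    ((D ≠ R) ↔ (D = ⊥ ∧ R ≠ ⊥)) ∧
    ((D ≠ R) ↔ (¬P ∧ D = ⊥ ∧ ∃ r : ℝ, R = r)) ∧
    ((D ≠ R) ↔ (D = ⊥ ∧ ∃ r : ℝ, R = r)) ∧
    ((∃ r : ℝ, D = r) ↔ (D = R ∧ ∃ r : ℝ, D = r)) := by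
  have hne : D ≠ R ↔ ¬P ∧ D = ⊥ ∧ ∃ r : ℝ, R = r := by
    refine ⟨fun h => ?_, fun ⟨_, hD, r, hr⟩ => by simp [hD, hr]⟩
    have hnp : ¬P := fun hp => h (hP hp)
    have hD := hnP hnp
    refine ⟨hnp, hD, _, (R.coe_toReal ?_ ?_).symm⟩
    · exact fun hRt => by simp [hR hRt] at hD
    · exact fun hRb => h (hD.trans hRb.symm)
  have hreal : ∀ x : EReal, (∃ r : ℝ, x = r) → x ≠ ⊥ := by
    rintro x ⟨r, rfl⟩
    exact EReal.coe_ne_bot r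
  have hbot : D = ⊥ → R ≠ ⊥ → D ≠ R := fun hD hRb h => hRb (h ▸ hD)
  refine ⟨⟨fun h => ⟨(hne.1 h).1, (hne.1 h).2.1, hreal R (hne.1 h).2.2⟩,
      fun h => hbot h.2.1 h.2.2⟩,
    ⟨fun h => ⟨(hne.1 h).1, (hne.1 h).2.2⟩, fun h => hne.2 ⟨h.1, hnP h.1, h.2⟩⟩,
    ⟨fun h => ⟨(hne.1 h).2.1, hreal R (hne.1 h).2.2⟩, fun h => hbot h.1 h.2⟩, hne,
    ⟨fun h => (hne.1 h).2, fun h => hbot h.1 (hreal R h.2)⟩,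
    ⟨fun h => ⟨hP (by_contra fun hp => hreal D h (hnP hp)), h⟩, And.right⟩⟩

lemma EReal.limsup_convex_comb_le {ι : Type*} {f : Filter ι} [f.NeBot] {u v : ι → EReal}
    {l k : ℝ} (hl : 0 < l) (hk : 0 < k) (hu : limsup u f ≠ ⊥) (hv : limsup v f ≠ ⊥) :
    limsup (fun i => (l : EReal) * u i + (k : EReal) * v i) f ≤
      (l : EReal) * limsup u f + (k : EReal) * limsup v f := by
  have hlu := EReal.limsup_const_mul_of_nonneg_of_ne_top (u := u) (f := f)
    (EReal.coe_nonneg.2 hl.le) (EReal.coe_ne_top l)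
  have hkv := EReal.limsup_const_mul_of_nonneg_of_ne_top (u := v) (f := f)
    (EReal.coe_nonneg.2 hk.le) (EReal.coe_ne_top k)
  have hne : ∀ {a : ℝ} {x : EReal}, 0 < a → x ≠ ⊥ → (a : EReal) * x ≠ ⊥ := fun ha hx =>
    (EReal.mul_ne_bot _ _).2 ⟨.inl (EReal.coe_ne_bot _), .inr hx,
      .inl (EReal.coe_ne_top _), .inl (EReal.coe_nonneg.2 ha.le)⟩
  refine (EReal.limsup_add_le ?_ ?_).trans_eq (by rw [hlu, hkv])
  · exact .inl (hlu ▸ hne hl hu)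
  · exact .inr (hkv ▸ hne hk hv)

lemma log_lintegral_exp_le (ν : Measure ℝ) (c : ℝ) {a b l k : ℝ} (hl : 0 < l) (hk : 0 < k)
    (hlk : l + k = 1) :
    ENNReal.log (∫⁻ x, ENNReal.ofReal (Real.exp ((l * a + k * b) * x / c)) ∂ν) ≤
      (l : EReal) * ENNReal.log (∫⁻ x, ENNReal.ofReal (Real.exp (a * x / c)) ∂ν) +
      (k : EReal) * ENNReal.log (∫⁻ x, ENNReal.ofReal (Real.exp (b * x / c)) ∂ν) := by
  have hmeas : ∀ t : ℝ, AEMeasurable (fun x => ENNReal.ofReal (Real.exp (t * x / c))) ν :=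
    fun t => by fun_prop
  have hsplit : ∀ x : ℝ, ENNReal.ofReal (Real.exp ((l * a + k * b) * x / c)) =
      ENNReal.ofReal (Real.exp (a * x / c)) ^ l * ENNReal.ofReal (Real.exp (b * x / c)) ^ k := by
    intro x
    rw [ENNReal.ofReal_rpow_of_pos (Real.exp_pos _), ENNReal.ofReal_rpow_of_pos (Real.exp_pos _),
      ← ENNReal.ofReal_mul (by positivity), ← Real.exp_mul, ← Real.exp_mul, ← Real.exp_add]
    ring_nf
  simp_rw [hsplit]
  calc _ ≤ ENNReal.log ((∫⁻ x, ENNReal.ofReal (Real.exp (a * x / c)) ∂ν) ^ l *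
        (∫⁻ x, ENNReal.ofReal (Real.exp (b * x / c)) ∂ν) ^ k) :=
      ENNReal.log_monotone (ENNReal.lintegral_mul_norm_pow_le (hmeas a) (hmeas b) hl.le hk.le hlk)
    _ = _ := by rw [ENNReal.log_mul_add, ENNReal.log_rpow, ENNReal.log_rpow]

lemma genLogMGF_econvex {ι : Type*} (lf : Filter ι) [lf.NeBot] (μ : ι → Measure ℝ) (c : ι → ℝ)
    (hc : ∀ i, 0 < c i) : EConvex (genLogMGF lf μ c) := by
  intro a b l k hl hk hlk ha hb
  refine (limsup_le_limsup (Eventually.of_forall fun i => ?_)).trans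
    (EReal.limsup_convex_comb_le hl hk ha hb)
  have hci : (0 : EReal) ≤ c i := EReal.coe_nonneg.2 (hc i).le
  refine (mul_le_mul_of_nonneg_left (log_lintegral_exp_le (μ i) (c i) hl hk hlk) hci).trans_eq ?_
  rw [EReal.left_distrib_of_nonneg_of_ne_top hci (EReal.coe_ne_top _), elog, elog,
    mul_left_comm, mul_left_comm (c i : EReal)]

lemma genLogMGF_zero_s11 {ι : Type*} (lf : Filter ι) [lf.NeBot] (μ : ι → Measure ℝ)
    [∀ i, IsProbabilityMeasure (μ i)] (c : ι → ℝ) : genLogMGF lf μ c 0 = 0 := by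
  simp [genLogMGF, elog]

theorem statement11_general
    {ι : Type*} (lf : Filter ι) [lf.NeBot]
    (μ : ι → Measure ℝ) [∀ i, IsProbabilityMeasure (μ i)]
    (c : ι → ℝ) (hc : ∀ i, 0 < c i)
    (L : ℝ → EReal) (hL : L = genLogMGF lf μ c)
    :
    ((rightDerivE L 0 ≠ rightLimE (rightDerivE L) 0) ↔ (¬ LowerSemicontinuousWithinAt L (Set.Ici (0:ℝ)) 0 ∧ rightDerivE L 0 = ⊥ ∧ rightLimE (rightDerivE L) 0 ≠ ⊥)) ∧
    ((rightDerivE L 0 ≠ rightLimE (rightDerivE L) 0) ↔ (¬ LowerSemicontinuousWithinAt L (Set.Ici (0:ℝ)) 0 ∧ ∃ r : ℝ, rightLimE (rightDerivE L) 0 = (r : EReal))) ∧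
    ((rightDerivE L 0 ≠ rightLimE (rightDerivE L) 0) ↔ (rightDerivE L 0 = ⊥ ∧ rightLimE (rightDerivE L) 0 ≠ ⊥)) ∧
    ((rightDerivE L 0 ≠ rightLimE (rightDerivE L) 0) ↔ (¬ LowerSemicontinuousWithinAt L (Set.Ici (0:ℝ)) 0 ∧ rightDerivE L 0 = ⊥ ∧ ∃ r : ℝ, rightLimE (rightDerivE L) 0 = (r : EReal))) ∧
    ((rightDerivE L 0 ≠ rightLimE (rightDerivE L) 0) ↔ (rightDerivE L 0 = ⊥ ∧ ∃ r : ℝ, rightLimE (rightDerivE L) 0 = (r : EReal))) ∧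
    ((∃ r : ℝ, rightDerivE L 0 = (r : EReal)) ↔
      (rightDerivE L 0 = rightLimE (rightDerivE L) 0 ∧ ∃ r : ℝ, rightDerivE L 0 = (r : EReal))) := by
  subst hL
  have h0 := genLogMGF_zero_s11 lf μ c
  have hconv := genLogMGF_econvex lf μ c hc
  exact EReal.ne_iff_of_cases (hconv.rightDerivE_zero_eq_rightLimE_of_lsc h0)
    (fun hlsc => not_ne_iff.1 fun hD =>
      hlsc (lowerSemicontinuousWithinAt_of_rightDerivE_ne_bot h0 hD))
    (hconv.rightDerivE_zero_eq_top_of_rightLimE h0)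

theorem statement11
    {ι : Type*} (lf : Filter ι) [lf.NeBot]
    (μ : ι → Measure ℝ) [∀ i, IsProbabilityMeasure (μ i)]
    (c : ι → ℝ) (hc : ∀ i, 0 < c i) (hc0 : Filter.Tendsto c lf (nhds (0 : ℝ)))
    (L : ℝ → EReal) (hL : L = genLogMGF lf μ c)
    :
    ((rightDerivE L 0 ≠ rightLimE (rightDerivE L) 0) ↔ (¬ LowerSemicontinuousWithinAt L (Set.Ici (0:ℝ)) 0 ∧ rightDerivE L 0 = ⊥ ∧ rightLimE (rightDerivE L) 0 ≠ ⊥)) ∧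
    ((rightDerivE L 0 ≠ rightLimE (rightDerivE L) 0) ↔ (¬ LowerSemicontinuousWithinAt L (Set.Ici (0:ℝ)) 0 ∧ ∃ r : ℝ, rightLimE (rightDerivE L) 0 = (r : EReal))) ∧
    ((rightDerivE L 0 ≠ rightLimE (rightDerivE L) 0) ↔ (rightDerivE L 0 = ⊥ ∧ rightLimE (rightDerivE L) 0 ≠ ⊥)) ∧
    ((rightDerivE L 0 ≠ rightLimE (rightDerivE L) 0) ↔ (¬ LowerSemicontinuousWithinAt L (Set.Ici (0:ℝ)) 0 ∧ rightDerivE L 0 = ⊥ ∧ ∃ r : ℝ, rightLimE (rightDerivE L) 0 = (r : EReal))) ∧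
    ((rightDerivE L 0 ≠ rightLimE (rightDerivE L) 0) ↔ (rightDerivE L 0 = ⊥ ∧ ∃ r : ℝ, rightLimE (rightDerivE L) 0 = (r : EReal))) ∧
    ((∃ r : ℝ, rightDerivE L 0 = (r : EReal)) ↔
      (rightDerivE L 0 = rightLimE (rightDerivE L) 0 ∧ ∃ r : ℝ, rightDerivE L 0 = (r : EReal))) :=
  statement11_general lf μ c hc L hL
end

section
/- For every x ∈ ℝ, l₀(x) ≥ L̄*(x). -/
open Filter MeasureTheory Set Topology

/-!
On the interval `(x - ε, x + ε)` the integrand `exp (t y / c)` is at least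
`exp ((t x - |t| ε) / c)`, so Markov's inequality gives
`c log ∫ exp (t y / c) dμ ≥ t x - |t| ε + c log μ (x - ε, x + ε)`.
Taking the `limsup` over the net yields `t x - L̄ t ≤ |t| ε + l₀ x` for every `ε > 0`; letting `ε → 0` and taking the supremum
over `t` gives `L̄* x ≤ l₀ x`.
-/

namespace EReal

lemma gc_coe_add (r : ℝ) : GaloisConnection (fun y : EReal => (r : EReal) + y) (· - r) :=
  fun y z => by
    rw [le_sub_iff_add_le (.inl (coe_ne_bot r)) (.inl (coe_ne_top r)), add_comm]

lemma coe_add_limsup_le {ι : Type*} (r : ℝ) (u : ι → EReal) (f : Filter ι) :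
    (r : EReal) + limsup u f ≤ limsup (fun i => (r : EReal) + u i) f :=
  (gc_coe_add r).l_limsup_le

lemma le_of_forall_pos_le_coe_mul_add {a b : EReal} (k : ℝ)
    (h : ∀ ε : ℝ, 0 < ε → a ≤ ((k * ε : ℝ) : EReal) + b) : a ≤ b := by
  have hkε : Tendsto (fun ε : ℝ => ((k * ε : ℝ) : EReal)) (𝓝[>] 0) (𝓝 0) := by
    have : Tendsto (fun ε : ℝ => k * ε) (𝓝 0) (𝓝 0) := by
      simpa using (continuous_const_mul k).tendsto 0
    exact (continuous_coe_real_ereal.tendsto 0 |>.comp this).mono_left nhdsWithin_le_nhds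
  have hlim : Tendsto (fun ε : ℝ => ((k * ε : ℝ) : EReal) + b) (𝓝[>] 0) (𝓝 b) := by
    simpa only [Function.comp_def, zero_add] using
      (continuousAt_add (p := (0, b)) (.inl zero_ne_top) (.inl zero_ne_bot)).tendsto.comp
        (hkε.prodMk_nhds tendsto_const_nhds)
  exact ge_of_tendsto hlim (eventually_nhdsWithin_of_forall h)

end EReal

lemma elog_mono_s12 {c : ℝ} (hc : 0 ≤ c) : Monotone (elog c) :=
  fun _ _ h => mul_le_mul_of_nonneg_left (ENNReal.log_monotone h) (EReal.coe_nonneg.2 hc)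

lemma elog_ofReal_exp_div_mul {c : ℝ} (hc : 0 < c) (r : ℝ) (m : ENNReal) :
    elog c (ENNReal.ofReal (Real.exp (r / c)) * m) = (r : EReal) + elog c m := by
  rw [elog, elog, ENNReal.log_mul_add, ENNReal.log_ofReal_of_pos (Real.exp_pos _), Real.log_exp,
    EReal.left_distrib_of_nonneg_of_ne_top (EReal.coe_nonneg.2 hc.le) (EReal.coe_ne_top c),
    ← EReal.coe_mul, mul_div_cancel₀ _ hc.ne']

lemma ofReal_exp_mul_measure_Ioo_le_lintegral (μ : Measure ℝ) {c : ℝ} (hc : 0 < c) (t x ε : ℝ) :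
    ENNReal.ofReal (Real.exp ((t * x - |t| * ε) / c)) * μ (Ioo (x - ε) (x + ε)) ≤
      ∫⁻ y, ENNReal.ofReal (Real.exp (t * y / c)) ∂μ := by
  refine le_trans (mul_le_mul_right (measure_mono fun y hy => ?_) _)
    (mul_meas_ge_le_lintegral₀ (by fun_prop) _)
  have hty : |t * (y - x)| ≤ |t| * ε := by
    rw [abs_mul]
    exact mul_le_mul_of_nonneg_left (abs_sub_lt_iff.2 ⟨by linarith [hy.2], by linarith [hy.1]⟩).le
      (abs_nonneg t)
  show ENNReal.ofReal _ ≤ ENNReal.ofReal _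
  gcongr
  linarith [neg_abs_le (t * (y - x))]

section

variable {ι : Type*} (lf : Filter ι) (μ : ι → Measure ℝ) {c : ι → ℝ}

lemma coe_add_limsup_elog_measure_Ioo_le_genLogMGF (hc : ∀ i, 0 < c i) (t x ε : ℝ) :
    ((t * x - |t| * ε : ℝ) : EReal) +
        limsup (fun i => elog (c i) (μ i (Ioo (x - ε) (x + ε)))) lf ≤ genLogMGF lf μ c t := by
  refine (EReal.coe_add_limsup_le _ _ _).trans (limsup_le_limsup (Eventually.of_forall fun i => ?_))
  dsimp only
  rw [← elog_ofReal_exp_div_mul (hc i)]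
  exact elog_mono_s12 (hc i).le (ofReal_exp_mul_measure_Ioo_le_lintegral (μ i) (hc i) t x ε)

lemma mul_sub_genLogMGF_le_add_l0fun (hc : ∀ i, 0 < c i) (t x : ℝ) {ε : ℝ} (hε : 0 < ε) :
    (t : EReal) * x - genLogMGF lf μ c t ≤ ((|t| * ε : ℝ) : EReal) + l0fun lf μ c x := by
  set M := limsup (fun i => elog (c i) (μ i (Ioo (x - ε) (x + ε)))) lf
  have hM : -M ≤ l0fun lf μ c x := EReal.neg_le_neg_iff.2 (biInf_le _ hε)
  calc (t : EReal) * x - genLogMGF lf μ c t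
      ≤ ((t * x : ℝ) : EReal) - (((t * x - |t| * ε : ℝ) : EReal) + M) :=
        EReal.sub_le_sub (EReal.coe_mul t x).ge
          (coe_add_limsup_elog_measure_Ioo_le_genLogMGF lf μ hc t x ε)
    _ = ((|t| * ε : ℝ) : EReal) + -M := by
        rw [sub_eq_add_neg, EReal.neg_add (.inl (EReal.coe_ne_bot _)) (.inl (EReal.coe_ne_top _)),
          sub_eq_add_neg, ← add_assoc, ← EReal.coe_neg, ← EReal.coe_add]
        ring_nf
    _ ≤ ((|t| * ε : ℝ) : EReal) + l0fun lf μ c x := add_le_add_right hM _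

end

theorem statement12_general
    {ι : Type*} (lf : Filter ι)
    (μ : ι → Measure ℝ)
    (c : ι → ℝ) (hc : ∀ i, 0 < c i)
    (L : ℝ → EReal) (hL : L = genLogMGF lf μ c)
    :
    ∀ x : ℝ, LegendreEE L ((x : ℝ) : EReal) ≤ l0fun lf μ c x := by
  subst hL
  exact fun x => iSup_le fun t => EReal.le_of_forall_pos_le_coe_mul_add |t| fun _ hε =>
    mul_sub_genLogMGF_le_add_l0fun lf μ hc t x hε

theorem statement12
    {ι : Type*} (lf : Filter ι) [lf.NeBot]
    (μ : ι → Measure ℝ) [∀ i, IsProbabilityMeasure (μ i)]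
    (c : ι → ℝ) (hc : ∀ i, 0 < c i) (hc0 : Filter.Tendsto c lf (nhds (0 : ℝ)))
    (L : ℝ → EReal) (hL : L = genLogMGF lf μ c)
    :
    ∀ x : ℝ, LegendreEE L ((x : ℝ) : EReal) ≤ l0fun lf μ c x :=
  statement12_general lf μ c hc L hL
end
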